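/- Under the assumptions of the previous estimate (with the same A, R, E, and the error equation), there is an (ε,δ)-independent constant C > 0 such that ‖εR_τ‖_{L^∞} ≤ C(E^{1/2} + δε² + δε²E + ε³E^{3/2}) for all sufficiently small ε > 0. -/

import Mathlib

open MeasureTheory Set

/-- The energy of the error term
`E = ∫ (R² + R_ξ² + R_{ξξ}² + 2ε²R_τ² + ε⁴R_{ττ}²) dξ`. -/
noncomputable def errEnergy (ε : ℝ) (R : ℝ → ℝ → ℝ) (τ : ℝ) : ℝ :=
  ∫ ξ : ℝ,
    ((R τ ξ) ^ 2 + (deriv (fun y : ℝ => R τ y) ξ) ^ 2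
      + (iteratedDeriv 2 (fun y : ℝ => R τ y) ξ) ^ 2
      + 2 * ε ^ 2 * (deriv (fun r : ℝ => R r ξ) τ) ^ 2
      + ε ^ 4 * (iteratedDeriv 2 (fun r : ℝ => R r ξ) τ) ^ 2)

/- ## Auxiliary lemmas -/

lemma two_sq_ineq (x y : ℝ) : (x + y) ^ 2 ≤ 2 * (x ^ 2 + y ^ 2) := by
  nlinarith [sq_nonneg (x - y)]

lemma three_sq_ineq (x y z : ℝ) : (x + y + z) ^ 2 ≤ 3 * (x ^ 2 + y ^ 2 + z ^ 2) := by
  nlinarith [sq_nonneg (x - y), sq_nonneg (x - z), sq_nonneg (y - z)]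

lemma four_sq_ineq (x y z w : ℝ) : (x + y + z + w) ^ 2 ≤ 4 * (x ^ 2 + y ^ 2 + z ^ 2 + w ^ 2) := by
  nlinarith [sq_nonneg (x - y), sq_nonneg (x - z), sq_nonneg (x - w), sq_nonneg (y - z),
    sq_nonneg (y - w), sq_nonneg (z - w)]

/-- one-dimensional Sobolev / Agmon type inequality:
`‖f‖_∞² ≤ ‖f‖_{L²}² + ‖f'‖_{L²}²`. -/
lemma agmon {f : ℝ → ℝ} (hf : Differentiable ℝ f) (hf' : Continuous (deriv f))
    (h1 : Integrable (fun x => f x ^ 2) (volume : Measure ℝ))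
    (h2 : Integrable (fun x => (deriv f x) ^ 2) (volume : Measure ℝ)) (x : ℝ) :
    f x ^ 2 ≤ (∫ y : ℝ, f y ^ 2) + ∫ y : ℝ, (deriv f y) ^ 2 := by
  have hfc : Continuous f := hf.continuous
  have hsum : Integrable (fun y => f y ^ 2 + (deriv f y) ^ 2) volume := h1.add h2
  have hg : ∀ y, HasDerivAt (fun z => f z ^ 2) (2 * f y * deriv f y) y := by
    intro y
    have := ((hf y).hasDerivAt.fun_pow 2)
    simpa [mul_comm, mul_assoc, mul_left_comm] using this
  have hgcont : Continuous (fun y => 2 * f y * deriv f y) := by continuity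
  have hbound : ∀ y, |2 * f y * deriv f y| ≤ f y ^ 2 + (deriv f y) ^ 2 := by
    intro y
    rw [abs_mul, abs_mul, abs_two]
    nlinarith [sq_abs (f y), sq_abs (deriv f y), sq_nonneg (|f y| - |deriv f y|)]
  have hgint : Integrable (fun y => 2 * f y * deriv f y) volume :=
    hsum.mono' hgcont.aestronglyMeasurable (Filter.Eventually.of_forall (fun y => by
      rw [Real.norm_eq_abs]; exact hbound y))
  have key : ∀ η : ℝ, 0 < η → f x ^ 2 ≤ ((∫ y : ℝ, f y ^ 2) + ∫ y : ℝ, (deriv f y) ^ 2) + η := by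
    intro η hη
    obtain ⟨a, hax, ha⟩ : ∃ a, a < x ∧ f a ^ 2 < η := by
      by_contra hc
      push_neg at hc
      have : Integrable (fun _ : ℝ => η) (volume.restrict (Iio x)) := by
        refine (h1.restrict (s := Iio x)).mono' aestronglyMeasurable_const ?_
        filter_upwards [ae_restrict_mem measurableSet_Iio] with y hy
        simpa [Real.norm_eq_abs, abs_of_pos hη] using hc y hy
      rw [integrable_const_iff] at this
      rcases this with h | h
      · exact hη.ne' h
      · have h := h.measure_univ_lt_top
        simp [Measure.restrict_apply, Real.volume_Iio] at h
    have hFTC : ∫ y in a..x, 2 * f y * deriv f y = f x ^ 2 - f a ^ 2 :=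
      intervalIntegral.integral_eq_sub_of_hasDerivAt (fun y _ => hg y)
        (hgint.intervalIntegrable)
    have hmono : ∫ y in a..x, 2 * f y * deriv f y ≤
        (∫ y : ℝ, f y ^ 2) + ∫ y : ℝ, (deriv f y) ^ 2 := by
      have h1' : ∫ y in a..x, 2 * f y * deriv f y ≤
          ∫ y in a..x, (f y ^ 2 + (deriv f y) ^ 2) := by
        apply intervalIntegral.integral_mono_on hax.le hgint.intervalIntegrable
          hsum.intervalIntegrable
        intro y _
        exact (le_abs_self _).trans (hbound y)
      have h2' : ∫ y in a..x, (f y ^ 2 + (deriv f y) ^ 2) ≤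
          ∫ y : ℝ, (f y ^ 2 + (deriv f y) ^ 2) := by
        rw [intervalIntegral.integral_of_le hax.le]
        exact setIntegral_le_integral hsum (Filter.Eventually.of_forall (fun y => by positivity))
      have h3' : (∫ y : ℝ, (f y ^ 2 + (deriv f y) ^ 2)) =
          (∫ y : ℝ, f y ^ 2) + ∫ y : ℝ, (deriv f y) ^ 2 := integral_add h1 h2
      linarith
    nlinarith [hFTC, hmono, ha]
  by_contra hc
  push_neg at hc
  have := key ((f x ^ 2 - ((∫ y : ℝ, f y ^ 2) + ∫ y : ℝ, (deriv f y) ^ 2)) / 2) (by linarith)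
  linarith

lemma slice_contDiff {F : ℝ → ℝ → ℝ} (hF : ContDiff ℝ (⊤ : ℕ∞) (Function.uncurry F)) (τ : ℝ) :
    ContDiff ℝ (⊤ : ℕ∞) (fun y => F τ y) :=
  hF.comp (ContDiff.prodMk (contDiff_const (c := τ)) contDiff_id)

lemma pderiv1_hasDerivAt {F : ℝ → ℝ → ℝ} (hF : ContDiff ℝ (⊤ : ℕ∞) (Function.uncurry F)) (τ ξ : ℝ) :
    HasDerivAt (fun s => F s ξ) (fderiv ℝ (Function.uncurry F) (τ, ξ) (1, 0)) τ := by
  have h1 : HasDerivAt (fun s : ℝ => (s, ξ)) ((1:ℝ), (0:ℝ)) τ :=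
    (hasDerivAt_id τ).prodMk (hasDerivAt_const τ ξ)
  have h2 := (hF.differentiable (by simp) (τ, ξ)).hasFDerivAt
  exact h2.comp_hasDerivAt τ h1

lemma pderiv1_eq {F : ℝ → ℝ → ℝ} (hF : ContDiff ℝ (⊤ : ℕ∞) (Function.uncurry F)) (τ ξ : ℝ) :
    deriv (fun s => F s ξ) τ = fderiv ℝ (Function.uncurry F) (τ, ξ) (1, 0) :=
  (pderiv1_hasDerivAt hF τ ξ).deriv

lemma pderiv1_smooth {F : ℝ → ℝ → ℝ} (hF : ContDiff ℝ (⊤ : ℕ∞) (Function.uncurry F)) :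
    ContDiff ℝ (⊤ : ℕ∞) (Function.uncurry (fun τ ξ => deriv (fun s => F s ξ) τ)) := by
  have h : (Function.uncurry fun τ ξ => deriv (fun s => F s ξ) τ)
      = fun p : ℝ × ℝ => fderiv ℝ (Function.uncurry F) p ((1:ℝ), (0:ℝ)) :=
    funext fun p => pderiv1_eq hF p.1 p.2
  rw [h]
  exact (hF.fderiv_right (by simp)).clm_apply contDiff_const

lemma oneD_deriv_smooth {f : ℝ → ℝ} (hf : ContDiff ℝ (⊤ : ℕ∞) f) : ContDiff ℝ (⊤ : ℕ∞) (deriv f) := by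
  have h : deriv f = fun x => fderiv ℝ f x 1 := rfl
  rw [h]
  exact (hf.fderiv_right (by simp)).clm_apply contDiff_const

lemma it2 (f : ℝ → ℝ) : iteratedDeriv 2 f = deriv (deriv f) := by
  rw [show (2 : ℕ) = 1 + 1 from rfl, iteratedDeriv_succ, iteratedDeriv_one]

lemma piece_bound {big p : ℝ → ℝ} (hbig : Integrable big (volume : Measure ℝ))
    (hp : Continuous p) (h0 : ∀ x, 0 ≤ p x) (hle : ∀ x, p x ≤ big x) :
    Integrable p (volume : Measure ℝ) ∧ (∫ x : ℝ, p x) ≤ ∫ x : ℝ, big x := by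
  have hip : Integrable p (volume : Measure ℝ) :=
    hbig.mono' hp.aestronglyMeasurable (Filter.Eventually.of_forall fun x => by
      rw [Real.norm_eq_abs, abs_of_nonneg (h0 x)]; exact hle x)
  exact ⟨hip, integral_mono hip hbig hle⟩

lemma N2_eq {a r : ℝ → ℝ} (ha : ContDiff ℝ (⊤ : ℕ∞) a) (hr : ContDiff ℝ (⊤ : ℕ∞) r) (ε y : ℝ) :
    iteratedDeriv 2 (fun y => 3 * a y ^ 2 * r y + 3 * ε * a y * r y ^ 2 + ε ^ 2 * r y ^ 3) y
      = 6 * deriv a y ^ 2 * r y + 6 * a y * deriv (deriv a) y * r y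
        + 12 * a y * deriv a y * deriv r y + 3 * a y ^ 2 * deriv (deriv r) y
        + 3 * ε * deriv (deriv a) y * r y ^ 2 + 12 * ε * deriv a y * r y * deriv r y
        + 6 * ε * a y * deriv r y ^ 2 + 6 * ε * a y * r y * deriv (deriv r) y
        + 6 * ε ^ 2 * r y * deriv r y ^ 2 + 3 * ε ^ 2 * r y ^ 2 * deriv (deriv r) y := by
  have hda : ∀ z : ℝ, HasDerivAt a (deriv a z) z :=
    fun z => (ha.differentiable (by simp) z).hasDerivAt
  have hdr : ∀ z : ℝ, HasDerivAt r (deriv r z) z :=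
    fun z => (hr.differentiable (by simp) z).hasDerivAt
  have hda2 : ∀ z : ℝ, HasDerivAt (deriv a) (deriv (deriv a) z) z :=
    fun z => ((oneD_deriv_smooth ha).differentiable (by simp) z).hasDerivAt
  have hdr2 : ∀ z : ℝ, HasDerivAt (deriv r) (deriv (deriv r) z) z :=
    fun z => ((oneD_deriv_smooth hr).differentiable (by simp) z).hasDerivAt
  set P1 : ℝ → ℝ := fun z => 6 * a z * deriv a z * r z + 3 * a z ^ 2 * deriv r z
      + 3 * ε * deriv a z * r z ^ 2 + 6 * ε * a z * r z * deriv r z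
      + 3 * ε ^ 2 * r z ^ 2 * deriv r z with hP1def
  have hP1 : ∀ z : ℝ,
      HasDerivAt (fun y => 3 * a y ^ 2 * r y + 3 * ε * a y * r y ^ 2 + ε ^ 2 * r y ^ 3)
        (P1 z) z := by
    intro z
    have comb := (((((hda z).fun_pow 2).fun_mul (hdr z)).const_mul 3).fun_add
        ((((hda z).fun_mul ((hdr z).fun_pow 2))).const_mul (3 * ε))).fun_add
        (((hdr z).fun_pow 3).const_mul (ε ^ 2))
    convert comb using 1
    · rfl
    · rfl
    · funext w; ring
    · push_cast; ring
  have hP2 : ∀ z : ℝ,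
      HasDerivAt P1
        (6 * deriv a z ^ 2 * r z + 6 * a z * deriv (deriv a) z * r z
          + 12 * a z * deriv a z * deriv r z + 3 * a z ^ 2 * deriv (deriv r) z
          + 3 * ε * deriv (deriv a) z * r z ^ 2 + 12 * ε * deriv a z * r z * deriv r z
          + 6 * ε * a z * deriv r z ^ 2 + 6 * ε * a z * r z * deriv (deriv r) z
          + 6 * ε ^ 2 * r z * deriv r z ^ 2 + 3 * ε ^ 2 * r z ^ 2 * deriv (deriv r) z) z := by
    intro z
    have comb := (((((((hda z).const_mul 6).fun_mul (hda2 z)).fun_mul (hdr z)).fun_add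
        ((((hda z).fun_pow 2).const_mul 3).fun_mul (hdr2 z))).fun_add
        ((((hda2 z).const_mul (3 * ε)).fun_mul ((hdr z).fun_pow 2)))).fun_add
        ((((hda z).const_mul (6 * ε)).fun_mul (hdr z)).fun_mul (hdr2 z))).fun_add
        ((((hdr z).fun_pow 2).const_mul (3 * ε ^ 2)).fun_mul (hdr2 z))
    convert comb using 1
    · rfl
    · rfl
    push_cast
    norm_num
    ring
  have hd1 : deriv (fun y => 3 * a y ^ 2 * r y + 3 * ε * a y * r y ^ 2 + ε ^ 2 * r y ^ 3) = P1 :=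
    funext fun z => (hP1 z).deriv
  rw [it2, hd1]
  exact (hP2 y).deriv

lemma P2_sq_bound (ε δ E Av A' A'' Rv R' R'' : ℝ)
    (h1 : Av ^ 2 ≤ δ ^ 2) (h2 : A' ^ 2 ≤ 2 * δ ^ 2) (h3 : Rv ^ 2 ≤ E) (h4 : R' ^ 2 ≤ E) :
    (6 * A' ^ 2 * Rv + 6 * Av * A'' * Rv + 12 * Av * A' * R' + 3 * Av ^ 2 * R''
      + 3 * ε * A'' * Rv ^ 2 + 12 * ε * A' * Rv * R' + 6 * ε * Av * R' ^ 2
      + 6 * ε * Av * Rv * R'' + 6 * ε ^ 2 * Rv * R' ^ 2 + 3 * ε ^ 2 * Rv ^ 2 * R'') ^ 2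
    ≤ 4000 * (δ ^ 2 * E + ε ^ 2 * E ^ 2) * (A' ^ 2 + A'' ^ 2)
      + 4000 * (δ ^ 4 + ε ^ 2 * δ ^ 2 * E + ε ^ 4 * E ^ 2) * (R' ^ 2 + R'' ^ 2) := by
  have hE0 : (0:ℝ) ≤ E := le_trans (sq_nonneg Rv) h3
  set U : ℝ := 6 * A' ^ 2 * Rv + 6 * Av * A'' * Rv + 12 * Av * A' * R' + 3 * Av ^ 2 * R'' with hU
  set V : ℝ := 3 * ε * A'' * Rv ^ 2 + 12 * ε * A' * Rv * R' + 6 * ε * Av * R' ^ 2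
      + 6 * ε * Av * Rv * R'' with hV
  set W : ℝ := 6 * ε ^ 2 * Rv * R' ^ 2 + 3 * ε ^ 2 * Rv ^ 2 * R'' with hW
  have hsplit : (6 * A' ^ 2 * Rv + 6 * Av * A'' * Rv + 12 * Av * A' * R' + 3 * Av ^ 2 * R''
      + 3 * ε * A'' * Rv ^ 2 + 12 * ε * A' * Rv * R' + 6 * ε * Av * R' ^ 2
      + 6 * ε * Av * Rv * R'' + 6 * ε ^ 2 * Rv * R' ^ 2 + 3 * ε ^ 2 * Rv ^ 2 * R'') ^ 2
      = (U + V + W) ^ 2 := by rw [hU, hV, hW]; ring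
  rw [hsplit]
  have h3s : (U + V + W) ^ 2 ≤ 3 * (U ^ 2 + V ^ 2 + W ^ 2) := three_sq_ineq U V W
  have hUb : U ^ 2 ≤ 4 * ((6 * A' ^ 2 * Rv) ^ 2 + (6 * Av * A'' * Rv) ^ 2
      + (12 * Av * A' * R') ^ 2 + (3 * Av ^ 2 * R'') ^ 2) := by
    rw [hU]
    exact four_sq_ineq _ _ _ _
  have hVb : V ^ 2 ≤ 4 * ((3 * ε * A'' * Rv ^ 2) ^ 2 + (12 * ε * A' * Rv * R') ^ 2
      + (6 * ε * Av * R' ^ 2) ^ 2 + (6 * ε * Av * Rv * R'') ^ 2) := by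
    rw [hV]
    exact four_sq_ineq _ _ _ _
  have hWb : W ^ 2 ≤ 2 * ((6 * ε ^ 2 * Rv * R' ^ 2) ^ 2 + (3 * ε ^ 2 * Rv ^ 2 * R'') ^ 2) := by
    rw [hW]
    exact two_sq_ineq _ _
  have m1 : A' ^ 2 * Rv ^ 2 ≤ 2 * δ ^ 2 * E :=
    mul_le_mul h2 h3 (sq_nonneg _) (by positivity)
  have m2 : Av ^ 2 * Rv ^ 2 ≤ δ ^ 2 * E := mul_le_mul h1 h3 (sq_nonneg _) (by positivity)
  have m3 : Av ^ 2 * R' ^ 2 ≤ δ ^ 2 * E := mul_le_mul h1 h4 (sq_nonneg _) (by positivity)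
  have m4 : Av ^ 2 * Av ^ 2 ≤ δ ^ 2 * δ ^ 2 := mul_le_mul h1 h1 (sq_nonneg _) (by positivity)
  have m5 : Rv ^ 2 * Rv ^ 2 ≤ E * E := mul_le_mul h3 h3 (sq_nonneg _) hE0
  have b1 : A' ^ 2 * (A' ^ 2 * Rv ^ 2) ≤ A' ^ 2 * (2 * δ ^ 2 * E) :=
    mul_le_mul_of_nonneg_left m1 (sq_nonneg _)
  have b2 : A'' ^ 2 * (Av ^ 2 * Rv ^ 2) ≤ A'' ^ 2 * (δ ^ 2 * E) :=
    mul_le_mul_of_nonneg_left m2 (sq_nonneg _)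
  have b3 : A' ^ 2 * (Av ^ 2 * R' ^ 2) ≤ A' ^ 2 * (δ ^ 2 * E) :=
    mul_le_mul_of_nonneg_left m3 (sq_nonneg _)
  have b4 : R'' ^ 2 * (Av ^ 2 * Av ^ 2) ≤ R'' ^ 2 * (δ ^ 2 * δ ^ 2) :=
    mul_le_mul_of_nonneg_left m4 (sq_nonneg _)
  have b5 : (ε ^ 2) * (A'' ^ 2 * (Rv ^ 2 * Rv ^ 2)) ≤ (ε ^ 2) * (A'' ^ 2 * (E * E)) :=
    mul_le_mul_of_nonneg_left (mul_le_mul_of_nonneg_left m5 (sq_nonneg _)) (sq_nonneg _)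
  have b6 : (ε ^ 2) * (R' ^ 2 * (A' ^ 2 * Rv ^ 2)) ≤ (ε ^ 2) * (R' ^ 2 * (2 * δ ^ 2 * E)) :=
    mul_le_mul_of_nonneg_left (mul_le_mul_of_nonneg_left m1 (sq_nonneg _)) (sq_nonneg _)
  have b7 : (ε ^ 2) * (R' ^ 2 * (Av ^ 2 * R' ^ 2)) ≤ (ε ^ 2) * (R' ^ 2 * (δ ^ 2 * E)) :=
    mul_le_mul_of_nonneg_left (mul_le_mul_of_nonneg_left m3 (sq_nonneg _)) (sq_nonneg _)
  have b8 : (ε ^ 2) * (R'' ^ 2 * (Av ^ 2 * Rv ^ 2)) ≤ (ε ^ 2) * (R'' ^ 2 * (δ ^ 2 * E)) :=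
    mul_le_mul_of_nonneg_left (mul_le_mul_of_nonneg_left m2 (sq_nonneg _)) (sq_nonneg _)
  have m6 : Rv ^ 2 * R' ^ 2 ≤ E * E := mul_le_mul h3 h4 (sq_nonneg _) hE0
  have b9 : (ε ^ 2 * ε ^ 2) * (R' ^ 2 * (Rv ^ 2 * R' ^ 2)) ≤ (ε ^ 2 * ε ^ 2) * (R' ^ 2 * (E * E)) :=
    mul_le_mul_of_nonneg_left (mul_le_mul_of_nonneg_left m6 (sq_nonneg _)) (by positivity)
  have b10 : (ε ^ 2 * ε ^ 2) * (R'' ^ 2 * (Rv ^ 2 * Rv ^ 2)) ≤ (ε ^ 2 * ε ^ 2) * (R'' ^ 2 * (E * E)) :=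
    mul_le_mul_of_nonneg_left (mul_le_mul_of_nonneg_left m5 (sq_nonneg _)) (by positivity)
  linarith [h3s, hUb, hVb, hWb, b1, b2, b3, b4, b5, b6, b7, b8, b9, b10,
    mul_nonneg (mul_nonneg (sq_nonneg δ) hE0) (sq_nonneg A'),
    mul_nonneg (mul_nonneg (sq_nonneg ε) (mul_nonneg hE0 hE0)) (sq_nonneg A'),
    mul_nonneg (mul_nonneg (sq_nonneg δ) hE0) (sq_nonneg A''),
    mul_nonneg (mul_nonneg (sq_nonneg ε) (mul_nonneg hE0 hE0)) (sq_nonneg A''),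
    mul_nonneg (mul_nonneg (sq_nonneg δ) (sq_nonneg δ)) (sq_nonneg R'),
    mul_nonneg (mul_nonneg (mul_nonneg (sq_nonneg ε) (sq_nonneg δ)) hE0) (sq_nonneg R'),
    mul_nonneg (mul_nonneg (mul_nonneg (sq_nonneg ε) (sq_nonneg ε)) (mul_nonneg hE0 hE0)) (sq_nonneg R'),
    mul_nonneg (mul_nonneg (sq_nonneg δ) (sq_nonneg δ)) (sq_nonneg R''),
    mul_nonneg (mul_nonneg (mul_nonneg (sq_nonneg ε) (sq_nonneg δ)) hE0) (sq_nonneg R''),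
    mul_nonneg (mul_nonneg (mul_nonneg (sq_nonneg ε) (sq_nonneg ε)) (mul_nonneg hE0 hE0)) (sq_nonneg R'')]

set_option maxHeartbeats 2000000 in
/-- A priori `L^∞` bound on `εR_τ`: under the same assumptions as for the
`‖R_{ξτ}‖_{L²}` estimate (with `A` bounded by `δ` and `R` solving the error
equation `R_{ξτ} = R + ε²R_{ττ} + (3A²R + 3εAR² + ε²R³)_{ξξ} + εA_{ττ}` with
finite energy `E`), there is an `(ε,δ)`-independent constant `C > 0` such that
`‖εR_τ‖_{L^∞} ≤ C(E^{1/2} + δε² + δε²E + ε³E^{3/2})` for all sufficiently small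
`ε > 0`. -/
theorem error_epsRtau_sup_bound :
    ∃ C : ℝ, 0 < C ∧ ∃ ε₀ : ℝ, 0 < ε₀ ∧
      ∀ (ε δ T : ℝ) (A R : ℝ → ℝ → ℝ),
        0 < ε → ε < ε₀ → 0 < δ → δ < 1 → 0 < T →
        ContDiff ℝ (⊤ : ℕ∞) (Function.uncurry A) →
        ContDiff ℝ (⊤ : ℕ∞) (Function.uncurry R) →
        (∀ τ ∈ Icc (0:ℝ) T, ∀ ξ : ℝ, |A τ ξ| ≤ δ) →
        (∀ τ ∈ Icc (0:ℝ) T, ∀ ξ : ℝ, |deriv (fun r : ℝ => A r ξ) τ| ≤ δ) →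
        (∀ τ ∈ Icc (0:ℝ) T,
          Integrable (fun ξ : ℝ => (deriv (fun y : ℝ => A τ y) ξ) ^ 2)
              (volume : Measure ℝ) ∧
            (∫ ξ : ℝ, (deriv (fun y : ℝ => A τ y) ξ) ^ 2) ≤ δ ^ 2) →
        (∀ τ ∈ Icc (0:ℝ) T,
          Integrable (fun ξ : ℝ => (iteratedDeriv 2 (fun y : ℝ => A τ y) ξ) ^ 2)
              (volume : Measure ℝ) ∧
            (∫ ξ : ℝ, (iteratedDeriv 2 (fun y : ℝ => A τ y) ξ) ^ 2) ≤ δ ^ 2) →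
        (∀ τ ∈ Icc (0:ℝ) T,
          Integrable (fun ξ : ℝ => (iteratedDeriv 2 (fun r : ℝ => A r ξ) τ) ^ 2)
              (volume : Measure ℝ) ∧
            (∫ ξ : ℝ, (iteratedDeriv 2 (fun r : ℝ => A r ξ) τ) ^ 2) ≤ δ ^ 2) →
        (∀ τ ∈ Icc (0:ℝ) T, Integrable (fun ξ : ℝ =>
          (R τ ξ) ^ 2 + (deriv (fun y : ℝ => R τ y) ξ) ^ 2
            + (iteratedDeriv 2 (fun y : ℝ => R τ y) ξ) ^ 2
            + 2 * ε ^ 2 * (deriv (fun r : ℝ => R r ξ) τ) ^ 2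
            + ε ^ 4 * (iteratedDeriv 2 (fun r : ℝ => R r ξ) τ) ^ 2)
          (volume : Measure ℝ)) →
        (∀ τ ∈ Icc (0:ℝ) T, Integrable (fun ξ : ℝ =>
          (deriv (fun y : ℝ => deriv (fun r : ℝ => R r y) τ) ξ) ^ 2)
          (volume : Measure ℝ)) →
        (∀ τ ξ : ℝ,
          deriv (fun y : ℝ => deriv (fun r : ℝ => R r y) τ) ξ
            = R τ ξ + ε ^ 2 * iteratedDeriv 2 (fun r : ℝ => R r ξ) τ
              + iteratedDeriv 2 (fun y : ℝ =>
                  3 * (A τ y) ^ 2 * R τ y + 3 * ε * A τ y * (R τ y) ^ 2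
                    + ε ^ 2 * (R τ y) ^ 3) ξ
              + ε * iteratedDeriv 2 (fun r : ℝ => A r ξ) τ) →
        ∀ τ ∈ Icc (0:ℝ) T, ∀ ξ : ℝ,
          ε * |deriv (fun r : ℝ => R r ξ) τ|
            ≤ C * (Real.sqrt (errEnergy ε R τ) + δ * ε ^ 2
                + δ * ε ^ 2 * errEnergy ε R τ
                + ε ^ 3 * (errEnergy ε R τ * Real.sqrt (errEnergy ε R τ))) := by
  refine ⟨300, by norm_num, 1, one_pos, ?_⟩
  intro ε δ T A R hε hε1 hδ hδ1 hT hA hR hAbd hAtbd hAx hAxx hAtt hInt hInt2 heq τ hτ ξ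
  have hε1' : ε ≤ 1 := le_of_lt hε1
  have hδ1' : δ ≤ 1 := le_of_lt hδ1
  -- smoothness of the various slices and partial derivatives
  have hRs : ContDiff ℝ (⊤ : ℕ∞) (fun y => R τ y) := slice_contDiff hR τ
  have hAs : ContDiff ℝ (⊤ : ℕ∞) (fun y => A τ y) := slice_contDiff hA τ
  have hR's : ContDiff ℝ (⊤ : ℕ∞) (deriv (fun y => R τ y)) := oneD_deriv_smooth hRs
  have hR''s : ContDiff ℝ (⊤ : ℕ∞) (deriv (deriv (fun y => R τ y))) := oneD_deriv_smooth hR's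
  have hA's : ContDiff ℝ (⊤ : ℕ∞) (deriv (fun y => A τ y)) := oneD_deriv_smooth hAs
  have hA''s : ContDiff ℝ (⊤ : ℕ∞) (deriv (deriv (fun y => A τ y))) := oneD_deriv_smooth hA's
  have hDτ : ContDiff ℝ (⊤ : ℕ∞) (Function.uncurry fun s x => deriv (fun t => R t x) s) :=
    pderiv1_smooth hR
  have hrt : ContDiff ℝ (⊤ : ℕ∞) (fun x => deriv (fun s => R s x) τ) := slice_contDiff hDτ τ
  have hQs : ContDiff ℝ (⊤ : ℕ∞) (deriv (fun x => deriv (fun s => R s x) τ)) := oneD_deriv_smooth hrt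
  have hrtt : ContDiff ℝ (⊤ : ℕ∞) (fun x => deriv (deriv (fun s => R s x)) τ) :=
    slice_contDiff (pderiv1_smooth hDτ) τ
  have hatt : ContDiff ℝ (⊤ : ℕ∞) (fun x => deriv (deriv (fun s => A s x)) τ) :=
    slice_contDiff (pderiv1_smooth (pderiv1_smooth hA)) τ
  -- energy and its pieces, in `deriv (deriv ·)` form
  set E := errEnergy ε R τ with hEdef
  have hI' : Integrable (fun x : ℝ =>
      (R τ x) ^ 2 + (deriv (fun y => R τ y) x) ^ 2
        + (deriv (deriv (fun y => R τ y)) x) ^ 2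
        + 2 * ε ^ 2 * (deriv (fun r => R r x) τ) ^ 2
        + ε ^ 4 * (deriv (deriv (fun r => R r x)) τ) ^ 2) (volume : Measure ℝ) := by
    have := hInt τ hτ
    simp only [it2] at this
    exact this
  have hEeq : E = ∫ x : ℝ,
      ((R τ x) ^ 2 + (deriv (fun y => R τ y) x) ^ 2
        + (deriv (deriv (fun y => R τ y)) x) ^ 2
        + 2 * ε ^ 2 * (deriv (fun r => R r x) τ) ^ 2
        + ε ^ 4 * (deriv (deriv (fun r => R r x)) τ) ^ 2) := by
    rw [hEdef]
    unfold errEnergy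
    simp only [it2]
  have hE0 : 0 ≤ E := by
    rw [hEeq]
    refine integral_nonneg fun x => ?_
    have n1 := sq_nonneg (R τ x)
    have n2 := sq_nonneg (deriv (fun y => R τ y) x)
    have n3 := sq_nonneg (deriv (deriv (fun y => R τ y)) x)
    have n4 : (0:ℝ) ≤ 2 * ε ^ 2 * (deriv (fun r => R r x) τ) ^ 2 := by positivity
    have n5 : (0:ℝ) ≤ ε ^ 4 * (deriv (deriv (fun r => R r x)) τ) ^ 2 := by positivity
    simp only [Pi.zero_apply]
    linarith
  -- pointwise domination lemmas for the pieces of the energy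
  have hdom : ∀ p : ℝ → ℝ, Continuous p → (∀ x, 0 ≤ p x) →
      (∀ x, p x ≤ (R τ x) ^ 2 + (deriv (fun y => R τ y) x) ^ 2
        + (deriv (deriv (fun y => R τ y)) x) ^ 2
        + 2 * ε ^ 2 * (deriv (fun r => R r x) τ) ^ 2
        + ε ^ 4 * (deriv (deriv (fun r => R r x)) τ) ^ 2) →
      Integrable p (volume : Measure ℝ) ∧ (∫ x : ℝ, p x) ≤ E := by
    intro p hc h0 hle
    obtain ⟨hint, hbd⟩ := piece_bound hI' hc h0 hle
    exact ⟨hint, by rw [hEeq]; exact hbd⟩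
  have cR : Continuous (fun x => R τ x) := hRs.continuous
  have cR' : Continuous (deriv (fun y => R τ y)) := hR's.continuous
  have cR'' : Continuous (deriv (deriv (fun y => R τ y))) := hR''s.continuous
  have cA : Continuous (fun x => A τ x) := hAs.continuous
  have cA' : Continuous (deriv (fun y => A τ y)) := hA's.continuous
  have cA'' : Continuous (deriv (deriv (fun y => A τ y))) := hA''s.continuous
  have crt : Continuous (fun x => deriv (fun s => R s x) τ) := hrt.continuous
  have crtt : Continuous (fun x => deriv (deriv (fun s => R s x)) τ) := hrtt.continuous
  have catt : Continuous (fun x => deriv (deriv (fun s => A s x)) τ) := hatt.continuous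
  have hposaux : ∀ x : ℝ, (0:ℝ) ≤ 2 * ε ^ 2 * (deriv (fun r => R r x) τ) ^ 2 :=
    fun x => by positivity
  have hposaux2 : ∀ x : ℝ, (0:ℝ) ≤ ε ^ 4 * (deriv (deriv (fun r => R r x)) τ) ^ 2 :=
    fun x => by positivity
  have hle1 : ∀ x : ℝ, (R τ x) ^ 2 ≤ (R τ x) ^ 2 + (deriv (fun y => R τ y) x) ^ 2
      + (deriv (deriv (fun y => R τ y)) x) ^ 2
      + 2 * ε ^ 2 * (deriv (fun r => R r x) τ) ^ 2
      + ε ^ 4 * (deriv (deriv (fun r => R r x)) τ) ^ 2 := by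
    intro x
    nlinarith [sq_nonneg (deriv (fun y => R τ y) x),
      sq_nonneg (deriv (deriv (fun y => R τ y)) x), hposaux x, hposaux2 x]
  have hle2 : ∀ x : ℝ, (deriv (fun y => R τ y) x) ^ 2 ≤ (R τ x) ^ 2
      + (deriv (fun y => R τ y) x) ^ 2
      + (deriv (deriv (fun y => R τ y)) x) ^ 2
      + 2 * ε ^ 2 * (deriv (fun r => R r x) τ) ^ 2
      + ε ^ 4 * (deriv (deriv (fun r => R r x)) τ) ^ 2 := by
    intro x
    nlinarith [sq_nonneg (R τ x),
      sq_nonneg (deriv (deriv (fun y => R τ y)) x), hposaux x, hposaux2 x]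
  have hle3 : ∀ x : ℝ, (deriv (deriv (fun y => R τ y)) x) ^ 2 ≤ (R τ x) ^ 2
      + (deriv (fun y => R τ y) x) ^ 2
      + (deriv (deriv (fun y => R τ y)) x) ^ 2
      + 2 * ε ^ 2 * (deriv (fun r => R r x) τ) ^ 2
      + ε ^ 4 * (deriv (deriv (fun r => R r x)) τ) ^ 2 := by
    intro x
    nlinarith [sq_nonneg (R τ x),
      sq_nonneg (deriv (fun y => R τ y) x), hposaux x, hposaux2 x]
  have hle5 : ∀ x : ℝ, ε ^ 4 * (deriv (deriv (fun s => R s x)) τ) ^ 2 ≤ (R τ x) ^ 2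
      + (deriv (fun y => R τ y) x) ^ 2
      + (deriv (deriv (fun y => R τ y)) x) ^ 2
      + 2 * ε ^ 2 * (deriv (fun r => R r x) τ) ^ 2
      + ε ^ 4 * (deriv (deriv (fun r => R r x)) τ) ^ 2 := by
    intro x
    nlinarith [sq_nonneg (R τ x), sq_nonneg (deriv (fun y => R τ y) x),
      sq_nonneg (deriv (deriv (fun y => R τ y)) x), hposaux x]
  have hle12 : ∀ x : ℝ, (R τ x) ^ 2 + (deriv (fun y => R τ y) x) ^ 2 ≤ (R τ x) ^ 2
      + (deriv (fun y => R τ y) x) ^ 2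
      + (deriv (deriv (fun y => R τ y)) x) ^ 2
      + 2 * ε ^ 2 * (deriv (fun r => R r x) τ) ^ 2
      + ε ^ 4 * (deriv (deriv (fun r => R r x)) τ) ^ 2 := by
    intro x
    nlinarith [sq_nonneg (deriv (deriv (fun y => R τ y)) x), hposaux x, hposaux2 x]
  have hle23 : ∀ x : ℝ, (deriv (fun y => R τ y) x) ^ 2
      + (deriv (deriv (fun y => R τ y)) x) ^ 2 ≤ (R τ x) ^ 2
      + (deriv (fun y => R τ y) x) ^ 2
      + (deriv (deriv (fun y => R τ y)) x) ^ 2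
      + 2 * ε ^ 2 * (deriv (fun r => R r x) τ) ^ 2
      + ε ^ 4 * (deriv (deriv (fun r => R r x)) τ) ^ 2 := by
    intro x
    nlinarith [sq_nonneg (R τ x), hposaux x, hposaux2 x]
  have hlef : ∀ x : ℝ, (ε * deriv (fun s => R s x) τ) ^ 2 ≤ (R τ x) ^ 2
      + (deriv (fun y => R τ y) x) ^ 2
      + (deriv (deriv (fun y => R τ y)) x) ^ 2
      + 2 * ε ^ 2 * (deriv (fun r => R r x) τ) ^ 2
      + ε ^ 4 * (deriv (deriv (fun r => R r x)) τ) ^ 2 := by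
    intro x
    nlinarith [sq_nonneg (R τ x), sq_nonneg (deriv (fun y => R τ y) x),
      sq_nonneg (deriv (deriv (fun y => R τ y)) x), hposaux2 x,
      sq_nonneg (ε * deriv (fun r => R r x) τ), sq_nonneg (deriv (fun r => R r x) τ),
      sq_nonneg ε]
  have hP1 := hdom (fun x => (R τ x) ^ 2) (cR.pow 2) (fun x => sq_nonneg _) hle1
  have hP2 := hdom (fun x => (deriv (fun y => R τ y) x) ^ 2) (cR'.pow 2)
    (fun x => sq_nonneg _) hle2
  have hP3 := hdom (fun x => (deriv (deriv (fun y => R τ y)) x) ^ 2) (cR''.pow 2)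
    (fun x => sq_nonneg _) hle3
  have hP5 := hdom (fun x => ε ^ 4 * (deriv (deriv (fun s => R s x)) τ) ^ 2)
    ((continuous_const.mul (crtt.pow 2))) (fun x => by positivity) hle5
  have hP12 := hdom (fun x => (R τ x) ^ 2 + (deriv (fun y => R τ y) x) ^ 2)
    ((cR.pow 2).add (cR'.pow 2)) (fun x => by positivity) hle12
  have hP23 := hdom (fun x => (deriv (fun y => R τ y) x) ^ 2
      + (deriv (deriv (fun y => R τ y)) x) ^ 2)
    ((cR'.pow 2).add (cR''.pow 2)) (fun x => by positivity) hle23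
  have hPf := hdom (fun x => (ε * deriv (fun s => R s x) τ) ^ 2)
    (((continuous_const.mul crt)).pow 2) (fun x => sq_nonneg _) hlef
  -- A pieces
  have hAx' := hAx τ hτ
  have hAxx' : Integrable (fun x : ℝ => (deriv (deriv (fun y => A τ y)) x) ^ 2)
        (volume : Measure ℝ) ∧
      (∫ x : ℝ, (deriv (deriv (fun y => A τ y)) x) ^ 2) ≤ δ ^ 2 := by
    have := hAxx τ hτ
    simp only [it2] at this
    exact this
  have hAtt' : Integrable (fun x : ℝ => (deriv (deriv (fun s => A s x)) τ) ^ 2)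
        (volume : Measure ℝ) ∧
      (∫ x : ℝ, (deriv (deriv (fun s => A s x)) τ) ^ 2) ≤ δ ^ 2 := by
    have := hAtt τ hτ
    simp only [it2] at this
    exact this
  -- sup bounds
  have hsupA : ∀ z : ℝ, (A τ z) ^ 2 ≤ δ ^ 2 := fun z => by
    have h := abs_le.mp (hAbd τ hτ z)
    exact sq_le_sq' h.1 h.2
  have hsupA' : ∀ z : ℝ, (deriv (fun y => A τ y) z) ^ 2 ≤ 2 * δ ^ 2 := fun z => by
    have h := agmon (hA's.differentiable (by simp)) cA'' hAx'.1 hAxx'.1 z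
    linarith [hAx'.2, hAxx'.2]
  have hsupR : ∀ z : ℝ, (R τ z) ^ 2 ≤ E := fun z => by
    have h := agmon (hRs.differentiable (by simp)) cR' hP1.1 hP2.1 z
    have hadd : (∫ x : ℝ, ((R τ x) ^ 2 + (deriv (fun y => R τ y) x) ^ 2))
        = (∫ x : ℝ, (R τ x) ^ 2) + ∫ x : ℝ, (deriv (fun y => R τ y) x) ^ 2 :=
      integral_add hP1.1 hP2.1
    have := hP12.2
    rw [hadd] at this
    linarith
  have hsupR' : ∀ z : ℝ, (deriv (fun y => R τ y) z) ^ 2 ≤ E := fun z => by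
    have h := agmon (hR's.differentiable (by simp)) cR'' hP2.1 hP3.1 z
    have hadd : (∫ x : ℝ, ((deriv (fun y => R τ y) x) ^ 2
        + (deriv (deriv (fun y => R τ y)) x) ^ 2))
        = (∫ x : ℝ, (deriv (fun y => R τ y) x) ^ 2)
          + ∫ x : ℝ, (deriv (deriv (fun y => R τ y)) x) ^ 2 :=
      integral_add hP2.1 hP3.1
    have := hP23.2
    rw [hadd] at this
    linarith
  -- the nonlinear term
  have hN : ∀ z : ℝ, iteratedDeriv 2 (fun y : ℝ =>
        3 * (A τ y) ^ 2 * R τ y + 3 * ε * A τ y * (R τ y) ^ 2 + ε ^ 2 * (R τ y) ^ 3) z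
      = 6 * deriv (fun y => A τ y) z ^ 2 * R τ z
        + 6 * A τ z * deriv (deriv (fun y => A τ y)) z * R τ z
        + 12 * A τ z * deriv (fun y => A τ y) z * deriv (fun y => R τ y) z
        + 3 * (A τ z) ^ 2 * deriv (deriv (fun y => R τ y)) z
        + 3 * ε * deriv (deriv (fun y => A τ y)) z * (R τ z) ^ 2
        + 12 * ε * deriv (fun y => A τ y) z * R τ z * deriv (fun y => R τ y) z
        + 6 * ε * A τ z * deriv (fun y => R τ y) z ^ 2
        + 6 * ε * A τ z * R τ z * deriv (deriv (fun y => R τ y)) z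
        + 6 * ε ^ 2 * R τ z * deriv (fun y => R τ y) z ^ 2
        + 3 * ε ^ 2 * (R τ z) ^ 2 * deriv (deriv (fun y => R τ y)) z :=
    fun z => N2_eq hAs hRs ε z
  -- continuity of the nonlinear second derivative expression
  have cP2e : Continuous (fun z : ℝ =>
      6 * deriv (fun y => A τ y) z ^ 2 * R τ z
        + 6 * A τ z * deriv (deriv (fun y => A τ y)) z * R τ z
        + 12 * A τ z * deriv (fun y => A τ y) z * deriv (fun y => R τ y) z
        + 3 * (A τ z) ^ 2 * deriv (deriv (fun y => R τ y)) z
        + 3 * ε * deriv (deriv (fun y => A τ y)) z * (R τ z) ^ 2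
        + 12 * ε * deriv (fun y => A τ y) z * R τ z * deriv (fun y => R τ y) z
        + 6 * ε * A τ z * deriv (fun y => R τ y) z ^ 2
        + 6 * ε * A τ z * R τ z * deriv (deriv (fun y => R τ y)) z
        + 6 * ε ^ 2 * R τ z * deriv (fun y => R τ y) z ^ 2
        + 3 * ε ^ 2 * (R τ z) ^ 2 * deriv (deriv (fun y => R τ y)) z) := by
    exact (((((((((((continuous_const.mul (cA'.pow 2)).mul cR).add
      (((continuous_const.mul cA).mul cA'').mul cR)).add
      (((continuous_const.mul cA).mul cA').mul cR')).add
      ((continuous_const.mul (cA.pow 2)).mul cR'')).add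
      ((continuous_const.mul cA'').mul (cR.pow 2))).add
      (((continuous_const.mul cA').mul cR).mul cR')).add
      ((continuous_const.mul cA).mul (cR'.pow 2))).add
      (((continuous_const.mul cA).mul cR).mul cR'')).add
      ((continuous_const.mul cR).mul (cR'.pow 2))).add
      ((continuous_const.mul (cR.pow 2)).mul cR''))
  -- the dominating function for (N'')²
  have hGint : Integrable (fun z : ℝ =>
      4000 * (δ ^ 2 * E + ε ^ 2 * E ^ 2) * ((deriv (fun y => A τ y) z) ^ 2
        + (deriv (deriv (fun y => A τ y)) z) ^ 2)
      + 4000 * (δ ^ 4 + ε ^ 2 * δ ^ 2 * E + ε ^ 4 * E ^ 2) * ((deriv (fun y => R τ y) z) ^ 2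
        + (deriv (deriv (fun y => R τ y)) z) ^ 2)) (volume : Measure ℝ) :=
    ((hAx'.1.add hAxx'.1).const_mul _).add ((hP2.1.add hP3.1).const_mul _)
  have hP2ptwise : ∀ z : ℝ,
      (6 * deriv (fun y => A τ y) z ^ 2 * R τ z
        + 6 * A τ z * deriv (deriv (fun y => A τ y)) z * R τ z
        + 12 * A τ z * deriv (fun y => A τ y) z * deriv (fun y => R τ y) z
        + 3 * (A τ z) ^ 2 * deriv (deriv (fun y => R τ y)) z
        + 3 * ε * deriv (deriv (fun y => A τ y)) z * (R τ z) ^ 2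
        + 12 * ε * deriv (fun y => A τ y) z * R τ z * deriv (fun y => R τ y) z
        + 6 * ε * A τ z * deriv (fun y => R τ y) z ^ 2
        + 6 * ε * A τ z * R τ z * deriv (deriv (fun y => R τ y)) z
        + 6 * ε ^ 2 * R τ z * deriv (fun y => R τ y) z ^ 2
        + 3 * ε ^ 2 * (R τ z) ^ 2 * deriv (deriv (fun y => R τ y)) z) ^ 2
      ≤ 4000 * (δ ^ 2 * E + ε ^ 2 * E ^ 2) * ((deriv (fun y => A τ y) z) ^ 2
          + (deriv (deriv (fun y => A τ y)) z) ^ 2)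
        + 4000 * (δ ^ 4 + ε ^ 2 * δ ^ 2 * E + ε ^ 4 * E ^ 2) * ((deriv (fun y => R τ y) z) ^ 2
          + (deriv (deriv (fun y => R τ y)) z) ^ 2) :=
    fun z => P2_sq_bound ε δ E (A τ z) (deriv (fun y => A τ y) z)
      (deriv (deriv (fun y => A τ y)) z) (R τ z) (deriv (fun y => R τ y) z)
      (deriv (deriv (fun y => R τ y)) z) (hsupA z) (hsupA' z) (hsupR z) (hsupR' z)
  obtain ⟨hNint, hNbd⟩ := piece_bound hGint (cP2e.fun_pow 2) (fun z => sq_nonneg _) hP2ptwise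
  -- the L² bound for Q = R_{τξ}
  have hQint : Integrable (fun x : ℝ =>
      (deriv (fun y => deriv (fun r => R r y) τ) x) ^ 2) (volume : Measure ℝ) := hInt2 τ hτ
  have hattint : Integrable (fun x : ℝ => ε ^ 2 * (deriv (deriv (fun s => A s x)) τ) ^ 2)
      (volume : Measure ℝ) := hAtt'.1.const_mul _
  have hQptwise : ∀ z : ℝ, (deriv (fun y => deriv (fun r => R r y) τ) z) ^ 2
      ≤ 4 * ((R τ z) ^ 2
        + ε ^ 4 * (deriv (deriv (fun s => R s z)) τ) ^ 2
        + (6 * deriv (fun y => A τ y) z ^ 2 * R τ z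
          + 6 * A τ z * deriv (deriv (fun y => A τ y)) z * R τ z
          + 12 * A τ z * deriv (fun y => A τ y) z * deriv (fun y => R τ y) z
          + 3 * (A τ z) ^ 2 * deriv (deriv (fun y => R τ y)) z
          + 3 * ε * deriv (deriv (fun y => A τ y)) z * (R τ z) ^ 2
          + 12 * ε * deriv (fun y => A τ y) z * R τ z * deriv (fun y => R τ y) z
          + 6 * ε * A τ z * deriv (fun y => R τ y) z ^ 2
          + 6 * ε * A τ z * R τ z * deriv (deriv (fun y => R τ y)) z
          + 6 * ε ^ 2 * R τ z * deriv (fun y => R τ y) z ^ 2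
          + 3 * ε ^ 2 * (R τ z) ^ 2 * deriv (deriv (fun y => R τ y)) z) ^ 2
        + ε ^ 2 * (deriv (deriv (fun s => A s z)) τ) ^ 2) := by
    intro z
    have he := heq τ z
    rw [hN z, it2 (fun r : ℝ => R r z), it2 (fun r : ℝ => A r z)] at he
    rw [he]
    calc (R τ z + ε ^ 2 * deriv (deriv fun r => R r z) τ + _ + ε * deriv (deriv fun r => A r z) τ) ^ 2
        ≤ 4 * ((R τ z) ^ 2 + (ε ^ 2 * deriv (deriv fun r => R r z) τ) ^ 2 + _ ^ 2
          + (ε * deriv (deriv fun r => A r z) τ) ^ 2) := four_sq_ineq _ _ _ _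
      _ = _ := by ring
  have hHint : Integrable (fun z : ℝ => 4 * ((R τ z) ^ 2
      + ε ^ 4 * (deriv (deriv (fun s => R s z)) τ) ^ 2
      + (6 * deriv (fun y => A τ y) z ^ 2 * R τ z
        + 6 * A τ z * deriv (deriv (fun y => A τ y)) z * R τ z
        + 12 * A τ z * deriv (fun y => A τ y) z * deriv (fun y => R τ y) z
        + 3 * (A τ z) ^ 2 * deriv (deriv (fun y => R τ y)) z
        + 3 * ε * deriv (deriv (fun y => A τ y)) z * (R τ z) ^ 2
        + 12 * ε * deriv (fun y => A τ y) z * R τ z * deriv (fun y => R τ y) z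
        + 6 * ε * A τ z * deriv (fun y => R τ y) z ^ 2
        + 6 * ε * A τ z * R τ z * deriv (deriv (fun y => R τ y)) z
        + 6 * ε ^ 2 * R τ z * deriv (fun y => R τ y) z ^ 2
        + 3 * ε ^ 2 * (R τ z) ^ 2 * deriv (deriv (fun y => R τ y)) z) ^ 2
      + ε ^ 2 * (deriv (deriv (fun s => A s z)) τ) ^ 2)) (volume : Measure ℝ) :=
    (((hP1.1.add hP5.1).add hNint).add hattint).const_mul 4
  have hQL2 : (∫ x : ℝ, (deriv (fun y => deriv (fun r => R r y) τ) x) ^ 2)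
      ≤ 4 * (E + E
        + (4000 * (δ ^ 2 * E + ε ^ 2 * E ^ 2) * (2 * δ ^ 2)
          + 4000 * (δ ^ 4 + ε ^ 2 * δ ^ 2 * E + ε ^ 4 * E ^ 2) * (2 * E))
        + ε ^ 2 * δ ^ 2) := by
    have step1 := integral_mono hQint hHint hQptwise
    rw [integral_const_mul] at step1
    have i15 : Integrable (fun z : ℝ => (R τ z) ^ 2
        + ε ^ 4 * (deriv (deriv (fun s => R s z)) τ) ^ 2) (volume : Measure ℝ) :=
      hP1.1.add hP5.1
    have i15N : Integrable (fun z : ℝ => (R τ z) ^ 2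
        + ε ^ 4 * (deriv (deriv (fun s => R s z)) τ) ^ 2
        + (6 * deriv (fun y => A τ y) z ^ 2 * R τ z
        + 6 * A τ z * deriv (deriv (fun y => A τ y)) z * R τ z
        + 12 * A τ z * deriv (fun y => A τ y) z * deriv (fun y => R τ y) z
        + 3 * (A τ z) ^ 2 * deriv (deriv (fun y => R τ y)) z
        + 3 * ε * deriv (deriv (fun y => A τ y)) z * (R τ z) ^ 2
        + 12 * ε * deriv (fun y => A τ y) z * R τ z * deriv (fun y => R τ y) z
        + 6 * ε * A τ z * deriv (fun y => R τ y) z ^ 2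
        + 6 * ε * A τ z * R τ z * deriv (deriv (fun y => R τ y)) z
        + 6 * ε ^ 2 * R τ z * deriv (fun y => R τ y) z ^ 2
        + 3 * ε ^ 2 * (R τ z) ^ 2 * deriv (deriv (fun y => R τ y)) z) ^ 2) (volume : Measure ℝ) := i15.add hNint
    rw [integral_add i15N hattint, integral_add i15 hNint, integral_add hP1.1 hP5.1,
      integral_const_mul, integral_const_mul] at step1
    -- bound each integral
    have hb1 := hP1.2
    have hb2 : ε ^ 4 * (∫ x : ℝ, (deriv (deriv (fun s => R s x)) τ) ^ 2) ≤ E := by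
      rw [← integral_const_mul]
      exact hP5.2
    have hb4 := hAtt'.2
    have hb3 : (∫ z : ℝ, (6 * deriv (fun y => A τ y) z ^ 2 * R τ z
        + 6 * A τ z * deriv (deriv (fun y => A τ y)) z * R τ z
        + 12 * A τ z * deriv (fun y => A τ y) z * deriv (fun y => R τ y) z
        + 3 * (A τ z) ^ 2 * deriv (deriv (fun y => R τ y)) z
        + 3 * ε * deriv (deriv (fun y => A τ y)) z * (R τ z) ^ 2
        + 12 * ε * deriv (fun y => A τ y) z * R τ z * deriv (fun y => R τ y) z
        + 6 * ε * A τ z * deriv (fun y => R τ y) z ^ 2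
        + 6 * ε * A τ z * R τ z * deriv (deriv (fun y => R τ y)) z
        + 6 * ε ^ 2 * R τ z * deriv (fun y => R τ y) z ^ 2
        + 3 * ε ^ 2 * (R τ z) ^ 2 * deriv (deriv (fun y => R τ y)) z) ^ 2)
        ≤ 4000 * (δ ^ 2 * E + ε ^ 2 * E ^ 2) * (2 * δ ^ 2)
          + 4000 * (δ ^ 4 + ε ^ 2 * δ ^ 2 * E + ε ^ 4 * E ^ 2) * (2 * E) := by
      refine hNbd.trans ?_
      have iA2 : Integrable (fun x : ℝ => (deriv (fun y => A τ y) x) ^ 2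
          + (deriv (deriv (fun y => A τ y)) x) ^ 2) (volume : Measure ℝ) :=
        hAx'.1.add hAxx'.1
      have iR2 : Integrable (fun x : ℝ => (deriv (fun y => R τ y) x) ^ 2
          + (deriv (deriv (fun y => R τ y)) x) ^ 2) (volume : Measure ℝ) :=
        hP2.1.add hP3.1
      rw [integral_add (iA2.const_mul _) (iR2.const_mul _),
        integral_const_mul, integral_const_mul, integral_add hAx'.1 hAxx'.1,
        integral_add hP2.1 hP3.1]
      have c1 : (0:ℝ) ≤ 4000 * (δ ^ 2 * E + ε ^ 2 * E ^ 2) := by positivity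
      have c2 : (0:ℝ) ≤ 4000 * (δ ^ 4 + ε ^ 2 * δ ^ 2 * E + ε ^ 4 * E ^ 2) := by positivity
      have d1 : (∫ x : ℝ, (deriv (fun y => A τ y) x) ^ 2)
          + (∫ x : ℝ, (deriv (deriv (fun y => A τ y)) x) ^ 2) ≤ 2 * δ ^ 2 := by
        linarith [hAx'.2, hAxx'.2]
      have d2 : (∫ x : ℝ, (deriv (fun y => R τ y) x) ^ 2)
          + (∫ x : ℝ, (deriv (deriv (fun y => R τ y)) x) ^ 2) ≤ 2 * E := by
        linarith [hP2.2, hP3.2]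
      have := mul_le_mul_of_nonneg_left d1 c1
      have := mul_le_mul_of_nonneg_left d2 c2
      linarith
    have hepsatt : ε ^ 2 * (∫ x : ℝ, (deriv (deriv (fun s => A s x)) τ) ^ 2)
        ≤ ε ^ 2 * δ ^ 2 := mul_le_mul_of_nonneg_left hb4 (sq_nonneg ε)
    have hsum : (∫ x : ℝ, (R τ x) ^ 2)
        + ε ^ 4 * (∫ x : ℝ, (deriv (deriv (fun s => R s x)) τ) ^ 2)
        + (∫ z : ℝ, (6 * deriv (fun y => A τ y) z ^ 2 * R τ z
          + 6 * A τ z * deriv (deriv (fun y => A τ y)) z * R τ z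
          + 12 * A τ z * deriv (fun y => A τ y) z * deriv (fun y => R τ y) z
          + 3 * (A τ z) ^ 2 * deriv (deriv (fun y => R τ y)) z
          + 3 * ε * deriv (deriv (fun y => A τ y)) z * (R τ z) ^ 2
          + 12 * ε * deriv (fun y => A τ y) z * R τ z * deriv (fun y => R τ y) z
          + 6 * ε * A τ z * deriv (fun y => R τ y) z ^ 2
          + 6 * ε * A τ z * R τ z * deriv (deriv (fun y => R τ y)) z
          + 6 * ε ^ 2 * R τ z * deriv (fun y => R τ y) z ^ 2
          + 3 * ε ^ 2 * (R τ z) ^ 2 * deriv (deriv (fun y => R τ y)) z) ^ 2)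
        + ε ^ 2 * (∫ x : ℝ, (deriv (deriv (fun s => A s x)) τ) ^ 2)
        ≤ E + E
          + (4000 * (δ ^ 2 * E + ε ^ 2 * E ^ 2) * (2 * δ ^ 2)
            + 4000 * (δ ^ 4 + ε ^ 2 * δ ^ 2 * E + ε ^ 4 * E ^ 2) * (2 * E))
          + ε ^ 2 * δ ^ 2 := by
      linarith
    linarith [step1, hsum]
  -- Sobolev embedding applied to f = ε R_τ
  have hfd : Differentiable ℝ (fun x : ℝ => ε * deriv (fun s => R s x) τ) :=
    (contDiff_const.mul hrt).differentiable (by simp)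
  have hfD : deriv (fun x : ℝ => ε * deriv (fun s => R s x) τ)
      = fun z => ε * deriv (fun x => deriv (fun s => R s x) τ) z :=
    funext fun z => deriv_const_mul ε (hrt.differentiable (by simp) z)
  have hfc : Continuous (deriv (fun x : ℝ => ε * deriv (fun s => R s x) τ)) := by
    rw [hfD]
    exact continuous_const.mul hQs.continuous
  have hfi2' : (fun x : ℝ => (deriv (fun x : ℝ => ε * deriv (fun s => R s x) τ) x) ^ 2)
      = fun x => ε ^ 2 * (deriv (fun y => deriv (fun r => R r y) τ) x) ^ 2 := by
    funext x
    rw [congrFun hfD x]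
    ring
  have hfi2 : Integrable (fun x : ℝ =>
      (deriv (fun x : ℝ => ε * deriv (fun s => R s x) τ) x) ^ 2) (volume : Measure ℝ) := by
    rw [hfi2']
    exact hQint.const_mul _
  have hag := agmon hfd hfc hPf.1 hfi2 ξ
  -- combine all bounds
  have hint2bd : (∫ y : ℝ, (deriv (fun x : ℝ => ε * deriv (fun s => R s x) τ) y) ^ 2)
      ≤ ε ^ 2 * (4 * (E + E
        + (4000 * (δ ^ 2 * E + ε ^ 2 * E ^ 2) * (2 * δ ^ 2)
          + 4000 * (δ ^ 4 + ε ^ 2 * δ ^ 2 * E + ε ^ 4 * E ^ 2) * (2 * E))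
        + ε ^ 2 * δ ^ 2)) := by
    rw [hfi2', integral_const_mul]
    exact mul_le_mul_of_nonneg_left hQL2 (sq_nonneg ε)
  have hkey : (ε * deriv (fun s => R s ξ) τ) ^ 2
      ≤ E + ε ^ 2 * (4 * (E + E
        + (4000 * (δ ^ 2 * E + ε ^ 2 * E ^ 2) * (2 * δ ^ 2)
          + 4000 * (δ ^ 4 + ε ^ 2 * δ ^ 2 * E + ε ^ 4 * E ^ 2) * (2 * E))
        + ε ^ 2 * δ ^ 2)) := by
    have := hPf.2
    linarith [hag]
  -- final numeric assembly
  set s := Real.sqrt E with hsdef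
  have hs0 : 0 ≤ s := Real.sqrt_nonneg E
  have hs2 : s ^ 2 = E := Real.sq_sqrt hE0
  have hx0 : (0:ℝ) ≤ δ * ε ^ 2 := by positivity
  have hy0 : (0:ℝ) ≤ δ * ε ^ 2 * E := mul_nonneg (by positivity) hE0
  have hz0 : (0:ℝ) ≤ ε ^ 3 * (E * s) :=
    mul_nonneg (pow_nonneg hε.le 3) (mul_nonneg hE0 hs0)
  have hz2 : (ε ^ 3 * (E * s)) ^ 2 = ε ^ 6 * (E ^ 2 * E) := by
    rw [mul_pow, mul_pow, hs2]
    ring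
  have g1 : ε ^ 2 * δ ^ 4 * E ≤ E := by
    have h1 : ε ^ 2 ≤ 1 := by nlinarith
    have h2 : δ ^ 2 ≤ 1 := by nlinarith
    have h2' : δ ^ 4 ≤ 1 := by nlinarith [sq_nonneg (δ ^ 2), pow_nonneg hδ.le 2]
    have h3 : ε ^ 2 * δ ^ 4 ≤ 1 := by
      nlinarith [mul_le_mul_of_nonneg_right h1 (pow_nonneg hδ.le 4)]
    nlinarith [mul_le_mul_of_nonneg_right h3 hE0]
  have g2 : ε ^ 2 * E ≤ E := by
    have h1 : ε ^ 2 ≤ 1 := by nlinarith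
    nlinarith [hE0]
  have hquad : E + (δ * ε ^ 2) ^ 2 + (δ * ε ^ 2 * E) ^ 2 + (ε ^ 3 * (E * s)) ^ 2
      ≤ (s + δ * ε ^ 2 + δ * ε ^ 2 * E + ε ^ 3 * (E * s)) ^ 2 := by
    nlinarith [hs2, mul_nonneg hs0 hx0, mul_nonneg hs0 hy0, mul_nonneg hs0 hz0,
      mul_nonneg hx0 hy0, mul_nonneg hx0 hz0, mul_nonneg hy0 hz0]
  have hmid : E + ε ^ 2 * (4 * (E + E
        + (4000 * (δ ^ 2 * E + ε ^ 2 * E ^ 2) * (2 * δ ^ 2)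
          + 4000 * (δ ^ 4 + ε ^ 2 * δ ^ 2 * E + ε ^ 4 * E ^ 2) * (2 * E))
        + ε ^ 2 * δ ^ 2))
      ≤ 90000 * (E + (δ * ε ^ 2) ^ 2 + (δ * ε ^ 2 * E) ^ 2 + (ε ^ 3 * (E * s)) ^ 2) := by
    rw [hz2]
    nlinarith [g1, g2, hE0, sq_nonneg ε, sq_nonneg δ, sq_nonneg (ε * δ),
      mul_nonneg (mul_nonneg (sq_nonneg (ε*ε)) (sq_nonneg δ)) (mul_nonneg hE0 hE0),
      mul_nonneg (mul_nonneg (mul_nonneg (sq_nonneg (ε*ε)) (sq_nonneg ε)) (mul_nonneg hE0 hE0)) hE0]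
  have hfinal_sq : (ε * deriv (fun s => R s ξ) τ) ^ 2
      ≤ (300 * (s + δ * ε ^ 2 + δ * ε ^ 2 * E + ε ^ 3 * (E * s))) ^ 2 := by
    have h90 : 90000 * (E + (δ * ε ^ 2) ^ 2 + (δ * ε ^ 2 * E) ^ 2 + (ε ^ 3 * (E * s)) ^ 2)
        ≤ (300 * (s + δ * ε ^ 2 + δ * ε ^ 2 * E + ε ^ 3 * (E * s))) ^ 2 := by
      have := hquad
      nlinarith
    linarith [hkey, hmid]
  have hS0 : 0 ≤ 300 * (s + δ * ε ^ 2 + δ * ε ^ 2 * E + ε ^ 3 * (E * s)) := by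
    nlinarith [hs0, hx0, hy0, hz0]
  have habs : |ε * deriv (fun s => R s ξ) τ|
      ≤ 300 * (s + δ * ε ^ 2 + δ * ε ^ 2 * E + ε ^ 3 * (E * s)) := by
    calc |ε * deriv (fun s => R s ξ) τ|
        = Real.sqrt ((ε * deriv (fun s => R s ξ) τ) ^ 2) := (Real.sqrt_sq_eq_abs _).symm
      _ ≤ Real.sqrt ((300 * (s + δ * ε ^ 2 + δ * ε ^ 2 * E + ε ^ 3 * (E * s))) ^ 2) :=
          Real.sqrt_le_sqrt hfinal_sq
      _ = 300 * (s + δ * ε ^ 2 + δ * ε ^ 2 * E + ε ^ 3 * (E * s)) := Real.sqrt_sq hS0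
  have hgoal : ε * |deriv (fun r : ℝ => R r ξ) τ| = |ε * deriv (fun s => R s ξ) τ| := by
    rw [abs_mul, abs_of_pos hε]
  rw [hgoal]
  exact habs
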